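/- Fix δ ∈ (0, 1/2) and ε ∈ (0, 1 − H(δ)), and set k_n = ⌈(2 log₂ n + 2 log₂ e)/(1 − H(δ) − ε)⌉ + 1. Then the probability that the Erdős–Rényi random graph G(n, 1/2) contains a vertex subset S with |S| = k_n whose induced subgraph has edge density at least 1 − δ tends to 0 as n → ∞. -/

import Mathlib

open MeasureTheory Filter

/-- The Erdős–Rényi `G(n, 1/2)` measure: the uniform probability measure on
edge-indicator functions `Sym2 (Fin n) → Bool`. -/
noncomputable def gnHalf (n : ℕ) : Measure (Sym2 (Fin n) → Bool) :=
  (PMF.uniformOfFintype (Sym2 (Fin n) → Bool)).toMeasure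

open scoped Classical in
/-- Number of edges of the graph `g` with both endpoints in `S`. -/
noncomputable def edgeCount (n : ℕ) (g : Sym2 (Fin n) → Bool) (S : Finset (Fin n)) : ℕ :=
  (Finset.univ.filter fun e : Sym2 (Fin n) =>
    g e = true ∧ ¬ e.IsDiag ∧ ∀ v ∈ e, v ∈ S).card

/-- Edge density of the subgraph induced by `S`. -/
noncomputable def density (n : ℕ) (g : Sym2 (Fin n) → Bool) (S : Finset (Fin n)) : ℝ :=
  (edgeCount n g S : ℝ) / (S.card.choose 2 : ℝ)

/-- Binary entropy function (base-2 logarithms). -/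
noncomputable def binEnt (δ : ℝ) : ℝ :=
  -δ * Real.logb 2 δ - (1 - δ) * Real.logb 2 (1 - δ)

/-- Inverse of the binary entropy function restricted to `[0, 1/2]`. -/
noncomputable def binEntInv (y : ℝ) : ℝ :=
  sSup {x : ℝ | x ∈ Set.Icc (0 : ℝ) (1/2) ∧ binEnt x ≤ y}

/-! First moment method. For a fixed `k`-set `S`, density at least `1 - δ` forces at least
`(1 - δ) C(k, 2)` of its `C(k, 2)` pairs to be edges, and at most `2 ^ (H(δ) C(k, 2))` edge
patterns on these pairs do so, so the probability is at most `2 ^ (-(1 - H(δ)) C(k, 2))`.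
Summing over the at most `n ^ k` sets `S` gives `n ^ k 2 ^ (-(c + ε) C(k, 2))` with
`c = 1 - H(δ) - ε`; the choice of `k` makes `(k - 1) / 2 ≥ log₂ n / c`, which turns this into
`n ^ (-ε / c)`. -/

open Finset

section Entropy

variable {δ : ℝ}

theorem neg_binEnt_mul_le (hδ0 : 0 < δ) (hδ : δ ≤ 1 / 2) {m a : ℝ}
    (ha : (1 - δ) * m ≤ a) :
    -binEnt δ * m ≤ a * Real.logb 2 (1 - δ) + (m - a) * Real.logb 2 δ := by
  have hlog : Real.logb 2 δ ≤ Real.logb 2 (1 - δ) :=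
    Real.logb_le_logb_of_le one_lt_two hδ0 (by linarith)
  unfold binEnt
  nlinarith [mul_nonneg (sub_nonneg.2 ha) (sub_nonneg.2 hlog)]

theorem two_rpow_neg_binEnt_mul_le (hδ0 : 0 < δ) (hδ : δ ≤ 1 / 2) {m a : ℕ} (ham : a ≤ m)
    (ha : (1 - δ) * m ≤ a) : (2 : ℝ) ^ (-binEnt δ * m) ≤ (1 - δ) ^ a * δ ^ (m - a) := by
  have hpow : ∀ {x : ℝ}, 0 < x → ∀ j : ℕ, x ^ j = (2 : ℝ) ^ (j * Real.logb 2 x) :=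
    fun hx j => by
      rw [mul_comm, Real.rpow_mul_natCast zero_le_two, Real.rpow_logb two_pos one_lt_two.ne' hx]
  rw [hpow (by linarith) a, hpow hδ0 (m - a), ← Real.rpow_add two_pos, Nat.cast_sub ham]
  exact Real.rpow_le_rpow_of_exponent_le one_le_two (neg_binEnt_mul_le hδ0 hδ ha)

theorem card_filter_powerset_le_two_rpow_binEnt {ι : Type*} (hδ0 : 0 < δ) (hδ : δ ≤ 1 / 2)
    (E : Finset ι) :
    (#{T ∈ E.powerset | (1 - δ) * #E ≤ #T} : ℝ) ≤ 2 ^ (binEnt δ * #E) := by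
  set good := {T ∈ E.powerset | (1 - δ) * #E ≤ #T}
  -- Under the `(1 - δ)`-biased product measure on subsets of `E` every set in `good` has mass
  -- at least `2 ^ (-H(δ) |E|)`, and the total mass is `1`.
  have hmass : (#good : ℝ) * 2 ^ (-binEnt δ * #E) ≤ 1 := by
    calc (#good : ℝ) * 2 ^ (-binEnt δ * #E)
        ≤ ∑ T ∈ good, (1 - δ) ^ #T * δ ^ (#E - #T) := by
          rw [← nsmul_eq_mul]
          refine card_nsmul_le_sum _ _ _ fun T hT => ?_
          obtain ⟨hTE, hT⟩ := mem_filter.1 hT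
          exact two_rpow_neg_binEnt_mul_le hδ0 hδ (card_le_card (mem_powerset.1 hTE)) hT
      _ ≤ ∑ T ∈ E.powerset, (1 - δ) ^ #T * δ ^ (#E - #T) :=
          sum_le_sum_of_subset_of_nonneg (filter_subset _ _) fun T _ _ => by
            have : 0 ≤ 1 - δ := by linarith
            positivity
      _ = 1 := by rw [sum_pow_mul_eq_add_pow, sub_add_cancel, one_pow]
  rwa [neg_mul, Real.rpow_neg zero_le_two, ← div_eq_mul_inv,
    div_le_one (Real.rpow_pos_of_pos two_pos _)] at hmass

end Entropy

section Coins

variable {α : Type*} [Fintype α] [DecidableEq α]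

theorem card_filter_filter_mem_le (E : Finset α) (F : Finset (Finset α)) :
    #{g : α → Bool | {e ∈ E | g e = true} ∈ F} ≤ #F * 2 ^ (Fintype.card α - #E) := by
  have hcard :
      #(F ×ˢ (univ : Finset ({e // e ∉ E} → Bool))) = #F * 2 ^ (Fintype.card α - #E) := by
    rw [card_product, card_univ, Fintype.card_fun, Fintype.card_bool,
      Fintype.card_subtype_compl, Fintype.card_coe]
  rw [← hcard]
  refine card_le_card_of_injOn (fun g => ({e ∈ E | g e = true}, fun e => g e))
    (fun g hg => by simpa using hg) fun g _ g' _ hgg' => funext fun e => ?_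
  obtain ⟨hE, hEc⟩ := Prod.ext_iff.1 hgg'
  by_cases he : e ∈ E
  · simpa [he] using congrArg (e ∈ ·) hE
  · exact congrFun hEc ⟨e, he⟩

theorem uniformOfFintype_toMeasure_card_true_ge_le {δ : ℝ} (hδ0 : 0 < δ) (hδ : δ ≤ 1 / 2)
    (E : Finset α) :
    (PMF.uniformOfFintype (α → Bool)).toMeasure {g | (1 - δ) * #E ≤ #{e ∈ E | g e = true}}
      ≤ ENNReal.ofReal (2 ^ ((binEnt δ - 1) * #E)) := by
  set good := {T ∈ E.powerset | (1 - δ) * #E ≤ #T}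
  set A := ({g : α → Bool | {e ∈ E | g e = true} ∈ good} : Finset _)
  have hset : {g : α → Bool | (1 - δ) * #E ≤ #{e ∈ E | g e = true}} = A := by
    ext g
    simp [A, good]
  have hN : #E + (Fintype.card α - #E) = Fintype.card α :=
    Nat.add_sub_cancel' (card_le_univ E)
  have hA : (#A : ℝ) / 2 ^ Fintype.card α ≤ 2 ^ ((binEnt δ - 1) * #E) :=
    calc (#A : ℝ) / 2 ^ Fintype.card α
        ≤ #good * 2 ^ (Fintype.card α - #E) / (2 ^ #E * 2 ^ (Fintype.card α - #E)) := by
          rw [← pow_add, hN]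
          gcongr
          exact_mod_cast card_filter_filter_mem_le E good
      _ = #good / 2 ^ #E := by field_simp
      _ ≤ 2 ^ (binEnt δ * #E) / 2 ^ (#E : ℝ) := by
          rw [Real.rpow_natCast]
          gcongr
          exact card_filter_powerset_le_two_rpow_binEnt hδ0 hδ E
      _ = 2 ^ ((binEnt δ - 1) * #E) := by rw [← Real.rpow_sub two_pos, sub_one_mul]
  rw [hset, PMF.toMeasure_uniformOfFintype_apply _ (Set.toFinite _).measurableSet]
  simp only [Finset.coe_sort_coe, Fintype.card_coe, Fintype.card_fun, Fintype.card_bool]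
  calc (#A : ENNReal) / (2 ^ Fintype.card α : ℕ)
      = ENNReal.ofReal (#A / 2 ^ Fintype.card α) := by
        rw [ENNReal.ofReal_div_of_pos (by positivity), ENNReal.ofReal_natCast]
        norm_cast
    _ ≤ _ := ENNReal.ofReal_le_ofReal hA

end Coins

section Graph

variable {V : Type*} [Fintype V]

open scoped Classical in
noncomputable def pairsWithin (S : Finset V) : Finset (Sym2 V) :=
  {e | ¬ e.IsDiag ∧ ∀ v ∈ e, v ∈ S}

theorem pairsWithin_eq_image_offDiag [DecidableEq V] (S : Finset V) :
    pairsWithin S = S.offDiag.image Sym2.mk.uncurry := by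
  ext e
  induction e using Sym2.ind with
  | _ a b =>
    simp only [pairsWithin, mem_filter, mem_univ, true_and, Sym2.mk_isDiag_iff, Sym2.mem_iff,
      forall_eq_or_imp, forall_eq, mem_image, mem_offDiag, Prod.exists, Function.uncurry_apply_pair,
      Sym2.eq_iff]
    constructor
    · rintro ⟨hab, ha, hb⟩
      exact ⟨a, b, ⟨ha, hb, hab⟩, Or.inl ⟨rfl, rfl⟩⟩
    · rintro ⟨x, y, ⟨hx, hy, hxy⟩, ⟨rfl, rfl⟩ | ⟨rfl, rfl⟩⟩
      exacts [⟨hxy, hx, hy⟩, ⟨Ne.symm hxy, hy, hx⟩]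

theorem card_pairsWithin (S : Finset V) :
    #(pairsWithin S) = (#S).choose 2 := by
  classical
  rw [pairsWithin_eq_image_offDiag, Sym2.card_image_offDiag]

open scoped Classical in
theorem edgeCount_eq_card_filter_pairsWithin (n : ℕ) (g : Sym2 (Fin n) → Bool)
    (S : Finset (Fin n)) : edgeCount n g S = #{e ∈ pairsWithin S | g e = true} := by
  simp only [edgeCount, pairsWithin, filter_filter]
  congr 1
  ext e
  simp only [mem_filter, mem_univ, true_and]
  tauto

theorem setOf_le_density_subset (n : ℕ) (δ : ℝ) (S : Finset (Fin n)) :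
    {g | 1 - δ ≤ density n g S}
      ⊆ {g | (1 - δ) * #(pairsWithin S) ≤ #{e ∈ pairsWithin S | g e = true}} := by
  intro g hg
  rw [Set.mem_ofPred, density, edgeCount_eq_card_filter_pairsWithin, ← card_pairsWithin] at hg
  exact mul_le_of_le_div₀ (Nat.cast_nonneg _) (Nat.cast_nonneg _) hg

end Graph

section RandomGraph

variable {δ : ℝ}

theorem gnHalf_le_density_le (n : ℕ) (hδ0 : 0 < δ) (hδ : δ ≤ 1 / 2) (S : Finset (Fin n)) :
    gnHalf n {g | 1 - δ ≤ density n g S}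
      ≤ ENNReal.ofReal (2 ^ ((binEnt δ - 1) * (#S).choose 2)) := by
  rw [← card_pairsWithin]
  exact (measure_mono (setOf_le_density_subset n δ S)).trans
    (uniformOfFintype_toMeasure_card_true_ge_le hδ0 hδ _)

theorem gnHalf_exists_le_density_le (n k : ℕ) (hδ0 : 0 < δ) (hδ : δ ≤ 1 / 2) :
    gnHalf n {g | ∃ S : Finset (Fin n), #S = k ∧ 1 - δ ≤ density n g S}
      ≤ ENNReal.ofReal ((n : ℝ) ^ k * 2 ^ ((binEnt δ - 1) * k.choose 2)) := by
  have hunion : {g | ∃ S : Finset (Fin n), #S = k ∧ 1 - δ ≤ density n g S}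
      = ⋃ S ∈ powersetCard k univ, {g | 1 - δ ≤ density n g S} := by
    ext g
    simp
  calc gnHalf n {g | ∃ S : Finset (Fin n), #S = k ∧ 1 - δ ≤ density n g S}
      ≤ ∑ S ∈ powersetCard k univ, gnHalf n {g | 1 - δ ≤ density n g S} := by
        rw [hunion]
        exact measure_biUnion_finset_le _ _
    _ ≤ ∑ _S ∈ powersetCard k (univ : Finset (Fin n)),
          ENNReal.ofReal (2 ^ ((binEnt δ - 1) * k.choose 2)) := by
        refine sum_le_sum fun S hS => ?_
        rw [← (mem_powersetCard_univ.1 hS)]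
        exact gnHalf_le_density_le n hδ0 hδ S
    _ = ENNReal.ofReal (n.choose k * 2 ^ ((binEnt δ - 1) * k.choose 2)) := by
        rw [sum_const, card_powersetCard, card_univ, Fintype.card_fin, nsmul_eq_mul,
          ENNReal.ofReal_mul (Nat.cast_nonneg _), ENNReal.ofReal_natCast]
    _ ≤ _ := by
        gcongr
        exact_mod_cast Nat.choose_le_pow n k

end RandomGraph

theorem mul_sub_mul_choose_two_le {c ε L k : ℝ} (hc : 0 < c) (hε : 0 ≤ ε) (hL : 0 ≤ L)
    (hk : 2 * L / c ≤ k - 1) : k * L - (c + ε) * (k * (k - 1) / 2) ≤ -(ε / c) * L := by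
  rw [div_le_iff₀ hc] at hk
  have hk1 : 1 ≤ k := by nlinarith
  obtain ⟨t, ht, rfl⟩ : ∃ t, 0 ≤ t ∧ ε = t * c := ⟨ε / c, by positivity, by field_simp⟩
  rw [mul_div_cancel_right₀ t hc.ne']
  nlinarith [mul_le_mul_of_nonneg_left hk (by linarith : 0 ≤ k),
    mul_nonneg ht (mul_nonneg (by linarith : 0 ≤ k - 1) hL)]

theorem pow_mul_two_rpow_choose_two_le {x c ε : ℝ} {k : ℕ} (hx : 1 ≤ x) (hc : 0 < c)
    (hε : 0 ≤ ε) (hk : 2 * Real.logb 2 x / c ≤ k - 1) :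
    x ^ k * (2 : ℝ) ^ (-(c + ε) * k.choose 2) ≤ x ^ (-(ε / c)) := by
  have hx2 : x = 2 ^ Real.logb 2 x :=
    (Real.rpow_logb two_pos one_lt_two.ne' (by linarith)).symm
  have hL : 0 ≤ Real.logb 2 x := Real.logb_nonneg one_lt_two hx
  rw [hx2, ← Real.rpow_natCast, ← Real.rpow_mul zero_le_two, ← Real.rpow_mul zero_le_two,
    ← Real.rpow_add two_pos, Nat.cast_choose_two]
  refine Real.rpow_le_rpow_of_exponent_le one_le_two ?_
  linarith [mul_sub_mul_choose_two_le hc hε hL hk]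

/-- Fix δ ∈ (0, 1/2) and ε ∈ (0, 1 − H(δ)), and set
`k_n = ⌈(2 log₂ n + 2 log₂ e)/(1 − H(δ) − ε)⌉ + 1`. Then the probability that `G(n, 1/2)`
contains a vertex subset `S` with `|S| = k_n` whose induced subgraph has edge density at
least `1 − δ` tends to 0 as `n → ∞`. -/
theorem stmt1 (δ ε : ℝ) (hδ : δ ∈ Set.Ioo 0 (1/2 : ℝ)) (hε : ε ∈ Set.Ioo 0 (1 - binEnt δ)) :
    Tendsto (fun n : ℕ =>
        gnHalf n {g | ∃ S : Finset (Fin n),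
          S.card = ⌈(2 * Real.logb 2 n + 2 * Real.logb 2 (Real.exp 1)) /
              (1 - binEnt δ - ε)⌉₊ + 1 ∧
          1 - δ ≤ density n g S})
      atTop (nhds 0) := by
  obtain ⟨hδ0, hδ⟩ := hδ
  obtain ⟨hε0, hεH⟩ := hε
  set c := 1 - binEnt δ - ε
  have hc : 0 < c := by linarith
  have hloge : 0 ≤ Real.logb 2 (Real.exp 1) :=
    Real.logb_nonneg one_lt_two (Real.one_le_exp zero_le_one)
  have hbound : ∀ n : ℕ, 1 ≤ n → gnHalf n {g | ∃ S : Finset (Fin n),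
      S.card = ⌈(2 * Real.logb 2 n + 2 * Real.logb 2 (Real.exp 1)) / c⌉₊ + 1 ∧
      1 - δ ≤ density n g S} ≤ ENNReal.ofReal ((n : ℝ) ^ (-(ε / c))) := fun n hn => by
    refine (gnHalf_exists_le_density_le n _ hδ0 hδ.le).trans (ENNReal.ofReal_le_ofReal ?_)
    rw [show binEnt δ - 1 = -(c + ε) by ring]
    refine pow_mul_two_rpow_choose_two_le (by exact_mod_cast hn) hc hε0.le ?_
    push_cast
    rw [add_sub_cancel_right]
    exact (div_le_div_of_nonneg_right (by linarith) hc.le).trans (Nat.le_ceil _)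
  have hlim :
      Tendsto (fun n : ℕ => ENNReal.ofReal ((n : ℝ) ^ (-(ε / c)))) atTop (nhds 0) := by
    simpa using ENNReal.tendsto_ofReal
      ((tendsto_rpow_neg_atTop (div_pos hε0 hc)).comp tendsto_natCast_atTop_atTop)
  exact tendsto_of_tendsto_of_tendsto_of_le_of_le' tendsto_const_nhds hlim
    (.of_forall fun _ => zero_le) (eventually_atTop.2 ⟨1, hbound⟩)
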